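/- For all n ≥ 2, the generating function of the asymmetric multinomial coefficients satisfies F_n(x_1,…,x_n) = Σ_{i=1}^{n} (x_1+⋯+x_i)·F_{n−1,≥i}(X∖x_i), where for 1 ≤ i ≤ m+1 one sets F_{m,≥i} = F_{m,i} + F_{m,i+1} + ⋯ + F_{m,m+1}. -/

import Mathlib

open Finset

/-- The operation k ↦ k̃_j (0-based index `j`): decrease the `j`-th entry by 1,
then delete the leftmost zero entry of the resulting tuple. -/
def ktilde (k : List ℕ) (j : ℕ) : List ℕ :=
  (k.set j (k.getD j 0 - 1)).erase 0

/-- The asymmetric multinomial coefficient ⟨⟨n;k⟩⟩, defined by ⟨⟨1;(1)⟩⟩ = 1 and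
⟨⟨n;k⟩⟩ = Σ_{j=1}^{i_k-1} ⟨⟨n-1;k̃_j⟩⟩, where i_k is the (1-based) position of the
leftmost zero of k (i_k = n+1 if there is no zero), so that the sum has
`k.indexOf 0` terms (0-based j). -/
def amc : ℕ → List ℕ → ℕ
  | 0, _ => 0
  | 1, k => if k = [1] then 1 else 0
  | n + 2, k => ∑ j ∈ Finset.range (k.idxOf 0), amc (n + 1) (ktilde k j)

/-- `f : Fin n → Fin n` (0-based labels and columns) is a parking function:
for every `i ≤ n` at least `i` labels lie in the first `i` columns. -/
def IsParking (n : ℕ) (f : Fin n → Fin n) : Prop :=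
  ∀ i : ℕ, i ≤ n → i ≤ (univ.filter fun a => (f a : ℕ) < i).card

/-- The dominance index of the label `a`: the number of columns strictly to the left of
`a`'s column containing no label greater than `a`. -/
def domIndex {n : ℕ} (f : Fin n → Fin n) (a : Fin n) : ℕ :=
  (univ.filter fun c : Fin n => c < f a ∧ ∀ b, f b = c → b < a).card

/-- Column-restricted parking function: every (1-based) label `a+1` satisfies
`d_f(a) < a+1`. -/
def IsCPF (n : ℕ) (f : Fin n → Fin n) : Prop :=
  IsParking n f ∧ ∀ a : Fin n, domIndex f a < (a : ℕ) + 1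

/-- The list of column heights of `f`. -/
def colHeights {n : ℕ} (f : Fin n → Fin n) : List ℕ :=
  List.ofFn fun c : Fin n => (univ.filter fun a => f a = c).card

/-- The number of column-restricted parking functions of size `n`. -/
noncomputable def cpfCount (n : ℕ) : ℕ := Nat.card {f : Fin n → Fin n // IsCPF n f}

/-- The number of column-restricted parking functions of size `n` with column heights `k`. -/
noncomputable def cpfCountWith (n : ℕ) (k : List ℕ) : ℕ :=
  Nat.card {f : Fin n → Fin n // IsCPF n f ∧ colHeights f = k}

/-- A composition `k` of `n` of length `n` is Catalan if `k_1 + ⋯ + k_j ≥ j` for all `j < n`. -/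
def IsCatalan (n : ℕ) (k : List ℕ) : Prop :=
  ∀ j < n, j ≤ (k.take j).sum

/-- The order-preserving embedding `Fin m → Fin (m+1)` skipping the (0-based) index `t`:
used to express evaluation of a polynomial in m variables at `X ∖ x_{t+1}`. -/
def skip (m t : ℕ) : Fin m → Fin (m + 1) := fun p =>
  if (p : ℕ) < t then p.castSucc else p.succ

/-- F_{n,i}(x_1,…,x_n) = Σ_{k ∈ Comp(n,n,i)} ⟨⟨n;k⟩⟩ x_1^{k_1}⋯x_n^{k_n},
where Comp(n,n,i) is the set of k ∈ Comp(n,n) with i_k = i. -/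
noncomputable def Fni (n i : ℕ) : MvPolynomial (Fin n) ℤ :=
  ∑ v ∈ (Finset.Nat.antidiagonalTuple n n).filter
      (fun v => (List.ofFn v).idxOf 0 + 1 = i),
    MvPolynomial.C (amc n (List.ofFn v) : ℤ) * ∏ t : Fin n, MvPolynomial.X t ^ v t

/-- F_n(x_1,…,x_n) = Σ_{k ∈ Comp(n,n)} ⟨⟨n;k⟩⟩ x_1^{k_1}⋯x_n^{k_n}. -/
noncomputable def Fpoly (n : ℕ) : MvPolynomial (Fin n) ℤ :=
  ∑ v ∈ Finset.Nat.antidiagonalTuple n n,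
    MvPolynomial.C (amc n (List.ofFn v) : ℤ) * ∏ t : Fin n, MvPolynomial.X t ^ v t

/-- F_{m,≥i} = F_{m,i} + F_{m,i+1} + ⋯ + F_{m,m+1}. -/
noncomputable def FnGe (m i : ℕ) : MvPolynomial (Fin m) ℤ :=
  ∑ ℓ ∈ Finset.Icc i (m + 1), Fni m ℓ


/-!
Unfolding the recursion for ⟨⟨m+1; v⟩⟩ writes F_{m+1} as the sum of ⟨⟨m; k̃_j v⟩⟩ x^v over the
pairs (v, j) with j < i_v. Putting u = v − e_j turns these into the pairs (u, j) with
u ∈ Comp(m, m+1) and j ≤ i_u, and k̃_j v becomes u with its leftmost zero deleted. Since u has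
more entries than its sum, it has a zero, at position i = i_u; deleting it leaves w ∈ Comp(m, m)
with i_w ≥ i, and x^v = x_j · x^w(X∖x_i). Grouping by i and summing over j ≤ i gives the identity.
-/

namespace List

variable {α : Type*} {N : ℕ} {v : Fin N → α} {a : α}

theorem set_ofFn (f : Fin N → α) (i : Fin N) (x : α) :
    (ofFn f).set i x = ofFn (Function.update f i x) := by
  refine ext_getElem (by simp) fun k h _ => ?_
  simp only [getElem_set, List.getElem_ofFn, Function.update_apply, Fin.ext_iff]
  grind

theorem eraseIdx_ofFn (f : Fin (N + 1) → α) (i : Fin (N + 1)) :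
    (ofFn f).eraseIdx i = ofFn (i.removeNth f) := by
  refine ext_getElem (by simp [length_eraseIdx, i.is_le]) fun k h _ => ?_
  rw [getElem_eraseIdx]
  simp only [List.getElem_ofFn, Fin.removeNth]
  split_ifs with hk
  · rw [Fin.succAbove_of_castSucc_lt _ _ hk]
    rfl
  · rw [Fin.succAbove_of_le_castSucc _ _ (not_lt.1 hk)]
    rfl

variable [DecidableEq α]

theorem le_idxOf_ofFn_iff {j : ℕ} (hj : j ≤ N) :
    j ≤ (ofFn v).idxOf a ↔ ∀ p : Fin N, (p : ℕ) < j → v p ≠ a := by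
  rcases j with _ | j
  · simp
  rw [Nat.add_one_le_iff, idxOf, lt_findIdx_iff]
  simp only [length_ofFn, List.getElem_ofFn, beq_eq_false_iff_ne, Nat.lt_add_one_iff]
  constructor
  · rintro ⟨_, h⟩ p hp
    exact h p hp
  · intro h
    exact ⟨hj, fun q hq => h ⟨q, by omega⟩ hq⟩

theorem ne_of_lt_idxOf_ofFn {p : Fin N} (h : (p : ℕ) < (ofFn v).idxOf a) : v p ≠ a :=
  (le_idxOf_ofFn_iff (v := v) (a := a) p.isLt).1 h p (Nat.lt_add_one p)

theorem idxOf_ofFn_le_of_eq {p : Fin N} (h : v p = a) : (ofFn v).idxOf a ≤ p := by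
  by_contra! hlt
  exact ne_of_lt_idxOf_ofFn hlt h

theorem apply_eq_of_idxOf_ofFn_eq {p : Fin N} (h : (ofFn v).idxOf a = p) : v p = a := by
  simpa [h] using getElem_idxOf (xs := ofFn v) (x := a) (by simp [h])

theorem idxOf_ofFn_le : (ofFn v).idxOf a ≤ N := by
  simpa using idxOf_le_length (l := ofFn v) (a := a)

theorem le_idxOf_ofFn_insertNth_iff {w : Fin N → α} (i : Fin (N + 1)) (x : α) :
    (i : ℕ) ≤ (ofFn (i.insertNth x w)).idxOf a ↔ (i : ℕ) ≤ (ofFn w).idxOf a := by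
  rw [le_idxOf_ofFn_iff i.is_le', le_idxOf_ofFn_iff i.is_le, Fin.forall_iff_succAbove i]
  simp only [lt_irrefl, false_imp_iff, true_and, Fin.val_fin_lt, Fin.succAbove_lt_iff_castSucc_lt,
    Fin.insertNth_apply_succAbove]
  rfl

theorem idxOf_ofFn_insertNth_self_eq_iff {w : Fin N → α} (i : Fin (N + 1)) :
    (ofFn (i.insertNth a w)).idxOf a = i ↔ (i : ℕ) ≤ (ofFn w).idxOf a := by
  rw [← le_idxOf_ofFn_insertNth_iff i a, le_antisymm_iff,
    and_iff_right (idxOf_ofFn_le_of_eq (Fin.insertNth_apply_same (α := fun _ => α) i a w))]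

end List

theorem lt_idxOf_ofFn_add_single_iff {N : ℕ} (u : Fin N → ℕ) (j : Fin N) :
    (j : ℕ) < (List.ofFn (u + Pi.single j 1)).idxOf 0 ↔ (j : ℕ) ≤ (List.ofFn u).idxOf 0 := by
  rw [← Nat.add_one_le_iff, List.le_idxOf_ofFn_iff j.isLt, List.le_idxOf_ofFn_iff j.isLt.le]
  refine forall_congr' fun p => ?_
  rcases lt_trichotomy p j with h | rfl | h
  · simp [h, h.ne, h.le]
  · simp
  · simp [h.not_ge, h.not_gt]

section Reindexing

variable {M : Type*} [AddCommMonoid M] {N : ℕ}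

theorem sum_range_eq_sum_filter_val_lt {n : ℕ} (h : n ≤ N) (f : ℕ → M) :
    ∑ j ∈ range n, f j = ∑ j ∈ univ.filter fun j : Fin N => (j : ℕ) < n, f j := by
  rw [sum_filter, Fin.sum_univ_eq_sum_range (fun j => if j < n then f j else 0), ← sum_filter]
  congr 1
  ext j
  simp only [mem_range, mem_filter]
  omega

theorem sum_filter_lt_idxOf_ofFn_eq_sum_add_single (k : ℕ) (j : Fin N)
    (f : (Fin N → ℕ) → M) :
    ∑ v ∈ Nat.antidiagonalTuple N (k + 1) with (j : ℕ) < (List.ofFn v).idxOf 0, f v =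
      ∑ u ∈ Nat.antidiagonalTuple N k with (j : ℕ) ≤ (List.ofFn u).idxOf 0,
        f (u + Pi.single j 1) := by
  have mem_iff (u : Fin N → ℕ) :
      u + Pi.single j 1 ∈ {v ∈ Nat.antidiagonalTuple N (k + 1) |
          (j : ℕ) < (List.ofFn v).idxOf 0} ↔
        u ∈ {u ∈ Nat.antidiagonalTuple N k | (j : ℕ) ≤ (List.ofFn u).idxOf 0} := by
    simp [Nat.mem_antidiagonalTuple, sum_add_distrib, lt_idxOf_ofFn_add_single_iff]
  have eq_add_single {v : Fin N → ℕ} (hv : (j : ℕ) < (List.ofFn v).idxOf 0) :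
      v - Pi.single j 1 + Pi.single j 1 = v := by
    have : v j ≠ 0 := List.ne_of_lt_idxOf_ofFn hv
    ext t
    rcases eq_or_ne t j with rfl | ht
    · simp only [Pi.add_apply, Pi.sub_apply, Pi.single_eq_same]
      omega
    · simp [ht]
  refine sum_nbij' (· - Pi.single j 1) (· + Pi.single j 1) ?_ (fun u hu => (mem_iff u).2 hu)
    (fun v hv => eq_add_single (mem_filter.1 hv).2) (fun u _ => add_tsub_cancel_right _ _) ?_
  · intro v hv
    rw [← eq_add_single (mem_filter.1 hv).2, mem_iff] at hv
    exact hv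
  · intro v hv
    simp only [eq_add_single (mem_filter.1 hv).2]

theorem sum_sum_lt_idxOf_ofFn_eq_sum_sum_add_single (k : ℕ) (g : (Fin N → ℕ) → Fin N → M) :
    ∑ v ∈ Nat.antidiagonalTuple N (k + 1),
        ∑ j ∈ univ.filter fun j : Fin N => (j : ℕ) < (List.ofFn v).idxOf 0, g v j =
      ∑ u ∈ Nat.antidiagonalTuple N k,
        ∑ j ∈ univ.filter fun j : Fin N => (j : ℕ) ≤ (List.ofFn u).idxOf 0,
          g (u + Pi.single j 1) j := by
  simp only [sum_filter]
  rw [sum_comm, sum_comm (s := Nat.antidiagonalTuple N k)]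
  refine sum_congr rfl fun j _ => ?_
  rw [← sum_filter, ← sum_filter, sum_filter_lt_idxOf_ofFn_eq_sum_add_single]

theorem sum_antidiagonalTuple_eq_sum_sum_insertNth_zero {k : ℕ} (hk : k ≤ N)
    (f : (Fin (N + 1) → ℕ) → M) :
    ∑ u ∈ Nat.antidiagonalTuple (N + 1) k, f u =
      ∑ i : Fin (N + 1), ∑ w ∈ Nat.antidiagonalTuple N k with (i : ℕ) ≤ (List.ofFn w).idxOf 0,
        f (i.insertNth 0 w) := by
  have idxOf_lt (u) (hu : u ∈ Nat.antidiagonalTuple (N + 1) k) :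
      (List.ofFn u).idxOf 0 < N + 1 := by
    obtain ⟨p, -, hp⟩ := exists_lt_of_sum_lt (s := univ) (f := u) (g := 1)
      (by simp only [Nat.mem_antidiagonalTuple] at hu; simp; omega)
    exact (List.idxOf_ofFn_le_of_eq (Nat.lt_one_iff.1 hp)).trans_lt p.isLt
  rw [← sum_fiberwise_of_maps_to (t := range (N + 1)) fun u hu => mem_range.2 (idxOf_lt u hu),
    ← Fin.sum_univ_eq_sum_range]
  refine sum_congr rfl fun i _ => ?_
  have mem_iff (w : Fin N → ℕ) :
      i.insertNth 0 w ∈ {u ∈ Nat.antidiagonalTuple (N + 1) k | (List.ofFn u).idxOf 0 = i} ↔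
        w ∈ {w ∈ Nat.antidiagonalTuple N k | (i : ℕ) ≤ (List.ofFn w).idxOf 0} := by
    simp only [mem_filter, Nat.mem_antidiagonalTuple, Fin.sum_insertNth, zero_add,
      List.idxOf_ofFn_insertNth_self_eq_iff]
  have insertNth_removeNth {u : Fin (N + 1) → ℕ} (hu : (List.ofFn u).idxOf 0 = i) :
      i.insertNth 0 (i.removeNth u) = u := by
    have := Fin.insertNth_self_removeNth i u
    rwa [List.apply_eq_of_idxOf_ofFn_eq hu] at this
  refine sum_nbij' i.removeNth (fun w : Fin N → ℕ => i.insertNth 0 w) ?_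
    (fun w hw => (mem_iff w).2 hw)
    (fun u hu => insertNth_removeNth (mem_filter.1 hu).2)
    (fun w _ => Fin.removeNth_insertNth (α := fun _ => ℕ) i 0 w) ?_
  · intro u hu
    rw [← insertNth_removeNth (mem_filter.1 hu).2, mem_iff] at hu
    exact hu
  · intro u hu
    simp only [insertNth_removeNth (mem_filter.1 hu).2]

end Reindexing

theorem ktilde_ofFn_add_single {N : ℕ} (u : Fin N → ℕ) (j : Fin N) :
    ktilde (List.ofFn (u + Pi.single j 1)) j = (List.ofFn u).erase 0 := by
  have : (List.ofFn (u + Pi.single j 1)).getD j 0 - 1 = u j := by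
    simp [List.getD_eq_getElem?_getD]
  rw [ktilde, this, List.set_ofFn, Function.update_eq_iff.2 ⟨rfl, fun t ht => by simp [ht]⟩]

theorem erase_zero_ofFn_insertNth_zero {N : ℕ} {w : Fin N → ℕ} {i : Fin (N + 1)}
    (h : (i : ℕ) ≤ (List.ofFn w).idxOf 0) :
    (List.ofFn (i.insertNth 0 w)).erase 0 = List.ofFn w := by
  rw [List.erase_eq_eraseIdx_of_idxOf ((List.idxOf_ofFn_insertNth_self_eq_iff i).2 h),
    List.eraseIdx_ofFn, Fin.removeNth_insertNth]

theorem skip_eq_succAbove {m : ℕ} (i : Fin (m + 1)) : skip m i = i.succAbove := by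
  ext t
  simp only [skip, Fin.succAbove, Fin.lt_def, Fin.val_castSucc]

theorem amc_succ_ofFn {m : ℕ} (hm : 1 ≤ m) (v : Fin (m + 1) → ℕ) :
    amc (m + 1) (List.ofFn v) =
      ∑ j ∈ univ.filter fun j : Fin (m + 1) => (j : ℕ) < (List.ofFn v).idxOf 0,
        amc m (ktilde (List.ofFn v) j) := by
  obtain ⟨m, rfl⟩ := Nat.exists_eq_add_of_le' hm
  rw [amc, sum_range_eq_sum_filter_val_lt List.idxOf_ofFn_le]

open MvPolynomial

section Monomials

variable {R : Type*} [CommSemiring R]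

theorem prod_X_pow_add_single {σ : Type*} [Fintype σ] [DecidableEq σ] (u : σ → ℕ) (j : σ) :
    ∏ t, (X t : MvPolynomial σ R) ^ (u + Pi.single j 1 : σ → ℕ) t = X j * ∏ t, X t ^ u t := by
  rw [mul_comm]
  simp only [Pi.add_apply, pow_add, prod_mul_distrib]
  congr 1
  rw [Fintype.prod_eq_single j fun t ht => by simp [ht]]
  simp

theorem prod_X_pow_insertNth_zero {N : ℕ} (i : Fin (N + 1)) (w : Fin N → ℕ) :
    ∏ s, (X s : MvPolynomial (Fin (N + 1)) R) ^ i.insertNth 0 w s =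
      rename i.succAbove (∏ t, X t ^ w t) := by
  simp [Fin.prod_univ_succAbove _ i, map_prod]

end Monomials

theorem FnGe_succ (m i : ℕ) :
    FnGe m (i + 1) =
      ∑ w ∈ Nat.antidiagonalTuple m m with i ≤ (List.ofFn w).idxOf 0,
        C (amc m (List.ofFn w) : ℤ) * ∏ t, X t ^ w t := by
  simp only [FnGe, Fni]
  rw [sum_fiberwise_eq_sum_filter]
  refine sum_congr (filter_congr fun w _ => ?_) fun _ _ => rfl
  have := List.idxOf_ofFn_le (v := w) (a := 0)
  rw [mem_Icc]
  omega

theorem Fpoly_succ {m : ℕ} (hm : 1 ≤ m) :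
    Fpoly (m + 1) =
      ∑ u ∈ Nat.antidiagonalTuple (m + 1) m,
        ∑ j ∈ univ.filter fun j : Fin (m + 1) => (j : ℕ) ≤ (List.ofFn u).idxOf 0,
          X j * (C (amc m ((List.ofFn u).erase 0) : ℤ) * ∏ t, X t ^ u t) := by
  simp only [Fpoly, amc_succ_ofFn hm, Nat.cast_sum, map_sum, sum_mul]
  rw [sum_sum_lt_idxOf_ofFn_eq_sum_sum_add_single]
  simp only [ktilde_ofFn_add_single, prod_X_pow_add_single, mul_left_comm]

/-- For all n ≥ 2 (written n = m+1, m ≥ 1),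
F_n(X) = Σ_{i=1}^{n} (x_1+⋯+x_i)·F_{n-1,≥i}(X∖x_i).
(The 1-based index i corresponds to the 0-based `i : Fin (m+1)` with value i-1.) -/
theorem statement11 (m : ℕ) (hm : 1 ≤ m) :
    Fpoly (m + 1) =
      ∑ i : Fin (m + 1),
        (∑ j ∈ Finset.univ.filter (fun j : Fin (m + 1) => j ≤ i), MvPolynomial.X j) *
          MvPolynomial.rename (skip m (i : ℕ)) (FnGe m ((i : ℕ) + 1)) := by
  rw [Fpoly_succ hm, sum_antidiagonalTuple_eq_sum_sum_insertNth_zero le_rfl]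
  refine sum_congr rfl fun i _ => ?_
  rw [FnGe_succ, map_sum, mul_sum]
  refine sum_congr rfl fun w hw => ?_
  have hi := (mem_filter.1 hw).2
  rw [(List.idxOf_ofFn_insertNth_self_eq_iff i).2 hi, erase_zero_ofFn_insertNth_zero hi,
    prod_X_pow_insertNth_zero, sum_mul, skip_eq_succAbove]
  simp only [Fin.val_fin_le, map_mul, map_natCast, map_prod, map_pow, rename_X]
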